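/- Let p be a prime number and let S be the group algebra 𝔽_p[ℤ/pℤ] (i.e., AddMonoidAlgebra (ZMod p) (ZMod p)), equipped with its canonical ℤ/pℤ-grading in which the basis element χ^d is homogeneous of degree d. Then the nilradical of S is not a homogeneous ideal. Concretely, the element χ^1 − χ^0 is nilpotent (indeed (χ^1 − χ^0)^p = 0), but its homogeneous components χ^1 and χ^0 = 1 are not nilpotent. -/

import Mathlib

/-! In characteristic `p` the Frobenius is additive, so `(χ¹ - χ⁰)^p = χ^{p•1} - χ⁰ = 0`
in `𝔽_p[ℤ/pℤ]`. Were the nilradical homogeneous, it would contain the degree-`1` component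
`χ¹` of this nilpotent element, while no `χ^g` is nilpotent since `(χ^g)^n = χ^{n•g} ≠ 0`. -/

namespace AddMonoidAlgebra

variable {R M : Type*}

theorem not_isNilpotent_single_one [Semiring R] [Nontrivial R] [AddMonoid M] (m : M) :
    ¬ IsNilpotent (single m (1 : R)) := by
  rintro ⟨n, hn⟩
  rw [single_pow, one_pow, single_eq_zero] at hn
  exact one_ne_zero hn

instance charP [CommSemiring R] [AddMonoid M] (p : ℕ) [CharP R p] : CharP R[M] p :=
  charP_of_injective_algebraMap (fun _ _ h ↦ single_right_inj.mp h) p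

theorem single_one_sub_single_one_pow_char [CommRing R] [AddCommMonoid M] (p : ℕ)
    [Fact p.Prime] [CharP R p] (m m' : M) :
    (single m (1 : R) - single m' 1) ^ p = single (p • m) 1 - single (p • m') 1 := by
  rw [sub_pow_char, single_pow, single_pow, one_pow]

theorem grade.decompose_apply [CommSemiring R] [AddMonoid M] [DecidableEq M] (x : R[M]) (m : M) :
    (DirectSum.decompose (grade R : M → Submodule R R[M]) x m : R[M]) = single m (x.coeff m) := by
  induction x using induction_linear with
  | zero => simp
  | add x y hx hy => simp [DirectSum.decompose_add, hx, hy, coeff_add]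
  | single m' r =>
    rw [grade.decompose_single]
    by_cases h : m' = m
    · subst h; simp
    · rw [DirectSum.of_eq_of_ne _ _ _ (Ne.symm h)]; simp [h]

end AddMonoidAlgebra

open AddMonoidAlgebra in
theorem Ideal.IsHomogeneous.single_coeff_mem {R M : Type*} [CommSemiring R] [AddMonoid M]
    [DecidableEq M] {I : Ideal R[M]} (hI : I.IsHomogeneous (grade R : M → Submodule R R[M]))
    {x : R[M]} (hx : x ∈ I) (m : M) : single m (x.coeff m) ∈ I :=
  grade.decompose_apply x m ▸ hI m hx

open AddMonoidAlgebra in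
theorem stmt_0 (p : ℕ) [Fact p.Prime] :
    ¬ (nilradical (AddMonoidAlgebra (ZMod p) (ZMod p))).IsHomogeneous
        (AddMonoidAlgebra.grade (ZMod p) :
          ZMod p → Submodule (ZMod p) (AddMonoidAlgebra (ZMod p) (ZMod p))) ∧
    (AddMonoidAlgebra.single (1 : ZMod p) (1 : ZMod p)
        - AddMonoidAlgebra.single (0 : ZMod p) (1 : ZMod p)) ^ p = 0 ∧
    ¬ IsNilpotent (AddMonoidAlgebra.single (1 : ZMod p) (1 : ZMod p)) ∧
    ¬ IsNilpotent (AddMonoidAlgebra.single (0 : ZMod p) (1 : ZMod p)) := by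
  have hpow : (single (1 : ZMod p) (1 : ZMod p) - single 0 1) ^ p = 0 := by
    have hp1 : p • (1 : ZMod p) = 0 := by rw [nsmul_one, ZMod.natCast_self]
    rw [single_one_sub_single_one_pow_char, hp1, smul_zero, sub_self]
  have hχ₁ : ¬ IsNilpotent (single (1 : ZMod p) (1 : ZMod p)) := not_isNilpotent_single_one 1
  refine ⟨fun hhom ↦ hχ₁ ?_, hpow, hχ₁, not_isNilpotent_single_one 0⟩
  simpa [mem_nilradical] using hhom.single_coeff_mem ⟨p, hpow⟩ 1
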